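/- arXiv:1808.09875 — 4 statements merged into one kernel-verified Lean document; each statement's English description precedes it below -/
import Mathlib

section
/- Internalization: Let CS be an axiomatically appropriate constant specification for FOLPb, p_0,...,p_k justification variables, X_0,...,X_k finite sets of individual variables, and X = X_0 ∪ ... ∪ X_k. If p_0:_{X_0}φ_0, ..., p_k:_{X_k}φ_k ⊢_CS ψ, then there exists a justification term t(p_0,...,p_k) such that p_0:_{X_0}φ_0, ..., p_k:_{X_k}φ_k ⊢_CS t:_X ψ. -/
/-- Justification terms of first-order justification logic (FOLPb / FOJT45). -/
inductive JTerm : Type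
  | jvar : Nat → JTerm
  | jconst : Nat → JTerm
  | app : JTerm → JTerm → JTerm
  | plus : JTerm → JTerm → JTerm
  | bang : JTerm → JTerm
  | bb : JTerm → JTerm
  | gen : Nat → JTerm → JTerm
  | quest : JTerm → JTerm
  deriving DecidableEq

namespace JTerm

/-- Basic variables occurring as `gen` subscripts in a term. -/
def gvars : JTerm → Finset Nat
  | jvar _ => ∅
  | jconst _ => ∅
  | app t s => t.gvars ∪ s.gvars
  | plus t s => t.gvars ∪ s.gvars
  | bang t => t.gvars
  | bb t => t.gvars
  | gen x t => insert x t.gvars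
  | quest t => t.gvars

end JTerm

/-- Formulas of first-order justification logic.  Individual "variables" are either
basic variables (`Sum.inl n`, which may be quantified and appear as `gen` subscripts)
or extra constants from `V` (witness variables / domain members), which are never
quantified. -/
inductive Fml (V : Type) : Type
  | atom : Nat → List (Nat ⊕ V) → Fml V
  | bot : Fml V
  | imp : Fml V → Fml V → Fml V
  | all : Nat → Fml V → Fml V
  | box : JTerm → Finset (Nat ⊕ V) → Fml V → Fml V

namespace Fml

variable {V : Type} [DecidableEq V]

def neg (φ : Fml V) : Fml V := φ.imp .bot
def orr (φ ψ : Fml V) : Fml V := φ.neg.imp ψ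
def andd (φ ψ : Fml V) : Fml V := (φ.imp ψ.neg).neg
def ex (x : Nat) (φ : Fml V) : Fml V := (Fml.all x φ.neg).neg

/-- Free individual variables.  Following the paper, `fv (t :_X φ) = X`. -/
def fv : Fml V → Finset (Nat ⊕ V)
  | atom _ l => l.toFinset
  | bot => ∅
  | imp φ ψ => φ.fv ∪ ψ.fv
  | all x φ => φ.fv \ {Sum.inl x}
  | box _ X _ => X

/-- Substitution of `e` for the free occurrences of the individual variable `x`. -/
def subst (x e : Nat ⊕ V) : Fml V → Fml V
  | atom P l => atom P (l.map fun v => if v = x then e else v)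
  | bot => bot
  | imp φ ψ => imp (subst x e φ) (subst x e ψ)
  | all y φ => if x = Sum.inl y then all y φ else all y (subst x e φ)
  | box t X φ =>
      if x ∈ X then box t (X.image fun v => if v = x then e else v) (subst x e φ)
      else box t X φ

/-- `e` is free for `x` in the given formula. -/
def freeFor (e x : Nat ⊕ V) : Fml V → Prop
  | atom _ _ => True
  | bot => True
  | imp φ ψ => freeFor e x φ ∧ freeFor e x ψ
  | all y φ => x ∉ (Fml.all y φ).fv ∨ (e ≠ Sum.inl y ∧ freeFor e x φ)
  | box _ X φ => freeFor e x φ ∧ (e ∈ φ.fv → e ∈ X)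

/-- All individual variables occurring in a formula (free, bound, in subscripts,
or as `gen` subscripts of justification terms). -/
def allVars : Fml V → Finset (Nat ⊕ V)
  | atom _ l => l.toFinset
  | bot => ∅
  | imp φ ψ => φ.allVars ∪ ψ.allVars
  | all x φ => insert (Sum.inl x) φ.allVars
  | box t X φ => X ∪ t.gvars.image Sum.inl ∪ φ.allVars

/-- The set of witness variables / domain constants (`Sum.inr`-variables) occurring
in a formula. -/
def wvars (φ : Fml V) : Finset (Nat ⊕ V) := φ.allVars.filter fun v => v.isRight

/-- Free basic variables. -/
def fbv (φ : Fml V) : Finset Nat :=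
  φ.fv.biUnion fun v => match v with | Sum.inl n => {n} | Sum.inr _ => ∅

/-- Universal closure (over the free basic variables). -/
noncomputable def close (φ : Fml V) : Fml V := φ.fbv.toList.foldr Fml.all φ

/-- Renaming of the free individual variables of a formula. -/
def renameFree (ρ : (Nat ⊕ V) → (Nat ⊕ V)) : Fml V → Fml V
  | atom P l => atom P (l.map ρ)
  | bot => bot
  | imp φ ψ => imp (renameFree ρ φ) (renameFree ρ ψ)
  | all y φ => all y (renameFree (Function.update ρ (Sum.inl y) (Sum.inl y)) φ)
  | box t X φ => box t (X.image ρ) (renameFree (fun v => if v ∈ X then ρ v else v) φ)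

/-- Replacement of *every* occurrence of the individual variable `a` by `e`
(used for witness variables, which are never bound). -/
def replaceAll (a e : Nat ⊕ V) : Fml V → Fml V
  | atom P l => atom P (l.map fun v => if v = a then e else v)
  | bot => bot
  | imp φ ψ => imp (replaceAll a e φ) (replaceAll a e ψ)
  | all x φ => all x (replaceAll a e φ)
  | box t X φ => box t (X.image fun v => if v = a then e else v) (replaceAll a e φ)

/-- Change the type of extra constants. -/
def vmap {V' : Type} [DecidableEq V'] (f : V → V') : Fml V → Fml V'
  | atom P l => atom P (l.map (Sum.map id f))
  | bot => bot
  | imp φ ψ => imp (vmap f φ) (vmap f ψ)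
  | all x φ => all x (vmap f φ)
  | box t X φ => box t (X.image (Sum.map id f)) (vmap f φ)

def size : Fml V → Nat
  | atom _ _ => 1
  | bot => 1
  | imp φ ψ => φ.size + ψ.size + 1
  | all _ φ => φ.size + 1
  | box _ _ φ => φ.size + 1

/-- Simultaneous substitution of all free basic variables. -/
def instAll (σ : Nat → Nat ⊕ V) : Fml V → Fml V
  | atom P l => atom P (l.map fun v => match v with | Sum.inl n => σ n | w => w)
  | bot => bot
  | imp φ ψ => imp (instAll σ φ) (instAll σ ψ)
  | all x φ => all x (instAll (Function.update σ x (Sum.inl x)) φ)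
  | box t X φ =>
      box t (X.image fun v => match v with | Sum.inl n => σ n | w => w)
        (instAll (fun n => if Sum.inl n ∈ X then σ n else Sum.inl n) φ)

theorem size_subst (x e : Nat ⊕ V) : ∀ φ : Fml V, (φ.subst x e).size = φ.size := by
  intro φ
  induction φ with
  | atom P l => simp [subst, size]
  | bot => simp [subst, size]
  | imp φ ψ ihφ ihψ => simp [subst, size, ihφ, ihψ]
  | all y φ ih => by_cases h : x = Sum.inl y <;> simp [subst, size, h, ih]
  | box t X φ ih => by_cases h : x ∈ X <;> simp [subst, size, h, ih]

theorem size_instAll : ∀ (φ : Fml V) (σ : Nat → Nat ⊕ V), (φ.instAll σ).size = φ.size := by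
  intro φ
  induction φ with
  | atom P l => intro σ; simp [instAll, size]
  | bot => intro σ; simp [instAll, size]
  | imp φ ψ ihφ ihψ => intro σ; simp [instAll, size, ihφ, ihψ]
  | all y φ ih => intro σ; simp [instAll, size, ih]
  | box t X φ ih => intro σ; simp [instAll, size, ih]

end Fml

/-- The two logics considered in the paper. -/
inductive Logic : Type
  | folpb
  | fojt45

/-- Axioms of the systems: **A1** (a standard Hilbert axiomatization of classical
first-order logic), **A2**, **A3**, **B1**–**B5**, together with the Barcan axiom
**Bb** (for FOLPb only) and negative introspection **B6** (for FOJT45 only). -/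
inductive IsAxiom {V : Type} [DecidableEq V] : Logic → Fml V → Prop
  | a1k (L) (φ ψ : Fml V) : IsAxiom L (φ.imp (ψ.imp φ))
  | a1s (L) (φ ψ χ : Fml V) :
      IsAxiom L ((φ.imp (ψ.imp χ)).imp ((φ.imp ψ).imp (φ.imp χ)))
  | a1dne (L) (φ : Fml V) : IsAxiom L (φ.neg.neg.imp φ)
  | a1inst (L) (x : Nat) (e : Nat ⊕ V) (φ : Fml V) (h : φ.freeFor e (Sum.inl x)) :
      IsAxiom L ((Fml.all x φ).imp (φ.subst (Sum.inl x) e))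
  | a1allImp (L) (x : Nat) (φ ψ : Fml V) :
      IsAxiom L ((Fml.all x (φ.imp ψ)).imp ((Fml.all x φ).imp (Fml.all x ψ)))
  | a1vac (L) (x : Nat) (φ : Fml V) (h : Sum.inl x ∉ φ.fv) :
      IsAxiom L (φ.imp (Fml.all x φ))
  | a2 (L) (t : JTerm) (X : Finset (Nat ⊕ V)) (y : Nat ⊕ V) (φ : Fml V)
      (h : y ∉ φ.fv) :
      IsAxiom L ((Fml.box t (insert y X) φ).imp (Fml.box t X φ))
  | a3 (L) (t : JTerm) (X : Finset (Nat ⊕ V)) (y : Nat ⊕ V) (φ : Fml V) :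
      IsAxiom L ((Fml.box t X φ).imp (Fml.box t (insert y X) φ))
  | b1 (L) (t : JTerm) (X : Finset (Nat ⊕ V)) (φ : Fml V) :
      IsAxiom L ((Fml.box t X φ).imp φ)
  | b2 (L) (t s : JTerm) (X : Finset (Nat ⊕ V)) (φ ψ : Fml V) :
      IsAxiom L ((Fml.box t X (φ.imp ψ)).imp
        ((Fml.box s X φ).imp (Fml.box (t.app s) X ψ)))
  | b3l (L) (t s : JTerm) (X : Finset (Nat ⊕ V)) (φ : Fml V) :
      IsAxiom L ((Fml.box t X φ).imp (Fml.box (t.plus s) X φ))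
  | b3r (L) (t s : JTerm) (X : Finset (Nat ⊕ V)) (φ : Fml V) :
      IsAxiom L ((Fml.box s X φ).imp (Fml.box (t.plus s) X φ))
  | b4 (L) (t : JTerm) (X : Finset (Nat ⊕ V)) (φ : Fml V) :
      IsAxiom L ((Fml.box t X φ).imp (Fml.box t.bang X (Fml.box t X φ)))
  | b5 (L) (t : JTerm) (X : Finset (Nat ⊕ V)) (x : Nat) (φ : Fml V)
      (h : Sum.inl x ∉ X) :
      IsAxiom L ((Fml.box t X φ).imp (Fml.box (t.gen x) X (Fml.all x φ)))
  | bb (t : JTerm) (X : Finset (Nat ⊕ V)) (y : Nat) (φ : Fml V)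
      (h : Sum.inl y ∉ X) :
      IsAxiom Logic.folpb
        ((Fml.all y (Fml.box t (insert (Sum.inl y) X) φ)).imp
          (Fml.box t.bb X (Fml.all y φ)))
  | b6 (t : JTerm) (X : Finset (Nat ⊕ V)) (φ : Fml V) :
      IsAxiom Logic.fojt45
        ((Fml.box t X φ).neg.imp (Fml.box t.quest X (Fml.box t X φ).neg))

/-- Derivability from a set `Γ` of assumptions, with extra axioms from the constant
specification `CS`; generalization is only applied to variables not free in `Γ`. -/
inductive Deriv {V : Type} [DecidableEq V] (L : Logic) (CS : Set (Fml V))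
    (Γ : Set (Fml V)) : Fml V → Prop
  | ax {φ : Fml V} : IsAxiom L φ → Deriv L CS Γ φ
  | cs {φ : Fml V} : φ ∈ CS → Deriv L CS Γ φ
  | hyp {φ : Fml V} : φ ∈ Γ → Deriv L CS Γ φ
  | mp {φ ψ : Fml V} : Deriv L CS Γ (φ.imp ψ) → Deriv L CS Γ φ → Deriv L CS Γ ψ
  | genR {φ : Fml V} {x : Nat} : Deriv L CS Γ φ →
      (∀ ψ ∈ Γ, Sum.inl x ∉ ψ.fv) → Deriv L CS Γ (Fml.all x φ)

/-- `CS` is a constant specification: each member has the form `c : ψ` with `ψ` an axiom. -/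
def IsCS {V : Type} [DecidableEq V] (L : Logic) (CS : Set (Fml V)) : Prop :=
  ∀ χ ∈ CS, ∃ (c : Nat) (φ : Fml V),
    χ = Fml.box (JTerm.jconst c) ∅ φ ∧ IsAxiom L φ

/-- `CS` is axiomatically appropriate. -/
def AxAppropriate {V : Type} [DecidableEq V] (L : Logic) (CS : Set (Fml V)) : Prop :=
  ∀ φ : Fml V, IsAxiom L φ → ∃ c : Nat, Fml.box (JTerm.jconst c) ∅ φ ∈ CS

def Consistent {V : Type} [DecidableEq V] (L : Logic) (CS Γ : Set (Fml V)) : Prop :=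
  ¬ Deriv L CS Γ Fml.bot

def MaxConsistent {V : Type} [DecidableEq V] (L : Logic) (CS Γ : Set (Fml V)) : Prop :=
  Consistent L CS Γ ∧ ∀ Δ : Set (Fml V), Γ ⊆ Δ → Consistent L CS Δ → Δ = Γ

/-- Formulas of the basic language (no witness variables). -/
abbrev FmlB := Fml Empty

/-- Henkin formulas: formulas possibly containing witness variables (`Sum.inr`). -/
abbrev FmlW := Fml Nat

/-- A basic-language formula regarded as a Henkin formula. -/
def liftB : FmlB → FmlW := Fml.vmap fun e => e.elim

/-- A Henkin formula containing no witness variables. -/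
def NoWitness (φ : FmlW) : Prop := ∀ v ∈ φ.allVars, v.isLeft = true

/-- Two formulas are variable variants: one is obtained from the other by a
bijective renaming of free individual variables. -/
def VarVariant {V : Type} [DecidableEq V] (φ ψ : Fml V) : Prop :=
  ∃ ρ : (Nat ⊕ V) → (Nat ⊕ V), Function.Bijective ρ ∧ ψ = Fml.renameFree ρ φ

/-- A constant specification is variant closed. -/
def VariantClosed {V : Type} [DecidableEq V] (CS : Set (Fml V)) : Prop :=
  ∀ (φ ψ : Fml V) (c : Nat), VarVariant φ ψ →
    (Fml.box (JTerm.jconst c) ∅ φ ∈ CS ↔ Fml.box (JTerm.jconst c) ∅ ψ ∈ CS)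

/-- The extension `CS(V)` of a basic constant specification to the language with
witness variables: justified axioms with some free basic variables replaced by
distinct witness variables. -/
def CSV (CS : Set FmlB) : Set FmlW :=
  {χ | ∃ (c : Nat) (φ : FmlB) (ρ : (Nat ⊕ Nat) → (Nat ⊕ Nat)),
    Fml.box (JTerm.jconst c) ∅ φ ∈ CS ∧
    Function.Injective ρ ∧
    (∀ m : Nat, ρ (Sum.inr m) = Sum.inr m) ∧
    (∀ n : Nat, ρ (Sum.inl n) = Sum.inl n ∨ ∃ m : Nat, ρ (Sum.inl n) = Sum.inr m) ∧
    χ = Fml.box (JTerm.jconst c) ∅ (Fml.renameFree ρ (liftB φ))}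

/-- `Γ^#`. -/
def sharp (Γ : Set FmlW) : Set FmlW :=
  {χ | ∃ (t : JTerm) (X : Finset (Nat ⊕ Nat)) (φ : FmlW),
    Fml.box t X φ ∈ Γ ∧ (Fml.box t X φ : FmlW).fbv = ∅ ∧ X = φ.wvars ∧ χ = φ.close}

/-! ### Templates -/

inductive Tmpl : Type
  | pvar : Nat → Tmpl
  | neg : Tmpl → Tmpl
  | orr : Tmpl → Tmpl → Tmpl
  | andd : Tmpl → Tmpl → Tmpl
  | box : Tmpl → Tmpl

namespace Tmpl

def letters : Tmpl → Multiset Nat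
  | pvar i => {i}
  | neg G => G.letters
  | orr G H => G.letters + H.letters
  | andd G H => G.letters + H.letters
  | box G => G.letters

/-- No propositional letter occurs more than once. -/
def IsTemplate (F : Tmpl) : Prop := F.letters.Nodup

def Positive : Tmpl → Prop
  | pvar _ => True
  | neg _ => False
  | orr G H => G.Positive ∧ H.Positive
  | andd G H => G.Positive ∧ H.Positive
  | box G => G.Positive

def Disjunctive : Tmpl → Prop
  | pvar _ => True
  | neg _ => False
  | orr G H => G.Disjunctive ∧ H.Disjunctive
  | andd _ _ => False
  | box G => G.Disjunctive

end Tmpl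

/-- The instantiation set `⟦F(φ⃗)⟧`, where the valuation `v` gives the Henkin formula
substituted for each propositional letter. -/
inductive Inst (v : Nat → FmlW) : Tmpl → FmlW → Prop
  | pvar (i : Nat) : Inst v (Tmpl.pvar i) (v i)
  | neg {G : Tmpl} {ψ : FmlW} : Inst v G ψ → Inst v (Tmpl.neg G) ψ.neg
  | orr {G H : Tmpl} {ψ θ : FmlW} :
      Inst v G ψ → Inst v H θ → Inst v (Tmpl.orr G H) (ψ.orr θ)
  | andd {G H : Tmpl} {ψ θ : FmlW} :
      Inst v G ψ → Inst v H θ → Inst v (Tmpl.andd G H) (ψ.andd θ)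
  | box {G : Tmpl} {ψ : FmlW} (t : JTerm) :
      Inst v G ψ → Inst v (Tmpl.box G) (Fml.box t ψ.wvars ψ)

/-- The set of negations of members of `⟦F(φ⃗)⟧`. -/
def NegInst (v : Nat → FmlW) (F : Tmpl) : Set FmlW :=
  {χ | ∃ ψ : FmlW, Inst v F ψ ∧ χ = ψ.neg}

/-- `Δ` admits instantiation (relative to the basic constant specification `CS`). -/
def AdmitsInst (CS : Set FmlB) (Δ : Set FmlW) : Prop :=
  ∀ F : Tmpl, F.IsTemplate → F.Disjunctive →
    ∀ (v : Nat → FmlW) (q x : Nat) (φ : FmlW),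
      Consistent Logic.folpb (CSV CS)
        (Δ ∪ NegInst (Function.update v q (Fml.all x φ)) F) →
      ∃ a : Nat,
        Consistent Logic.folpb (CSV CS)
          (Δ ∪ NegInst (Function.update v q (φ.subst (Sum.inl x) (Sum.inr a))) F)

/-! ### Fitting models -/

/-- A Fitting model for FOLPb with constant domain `D`. -/
structure FModel (D : Type) [DecidableEq D] where
  W : Type
  nonempty : Nonempty W
  R : W → W → Prop
  refl : ∀ w, R w w
  trans : ∀ {u v w}, R u v → R v w → R u w
  I : Nat → W → List D → Prop
  E : JTerm → Fml D → Set W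
  condApp : ∀ (t s : JTerm) (φ ψ : Fml D), E t (φ.imp ψ) ∩ E s φ ⊆ E (t.app s) ψ
  condPlus : ∀ (t s : JTerm) (φ : Fml D), E t φ ∪ E s φ ⊆ E (t.plus s) φ
  condBang : ∀ (t : JTerm) (φ : Fml D) (X : Finset (Nat ⊕ D)),
    (∀ x ∈ X, x.isRight = true) → φ.wvars ⊆ X →
    E t φ ⊆ E t.bang (Fml.box t X φ)
  condClosure : ∀ (t : JTerm) (φ : Fml D) {w w'},
    w ∈ E t φ → R w w' → w' ∈ E t φ
  condInst : ∀ (t : JTerm) (φ : Fml D) (x : Nat) (a : D) {w},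
    w ∈ E t φ → w ∈ E t (φ.subst (Sum.inl x) (Sum.inr a))
  condGen : ∀ (t : JTerm) (φ : Fml D) (x : Nat), E t φ ⊆ E (t.gen x) (Fml.all x φ)
  condB : ∀ (t : JTerm) (φ : Fml D) (y : Nat) {w},
    (∀ a : D, w ∈ E t (φ.subst (Sum.inl y) (Sum.inr a))) →
    w ∈ E t.bb (Fml.all y φ)

/-- Truth of a (closed) `D`-formula at a world. -/
def Truth {D : Type} [DecidableEq D] (M : FModel D) : M.W → Fml D → Prop
  | w, .atom P l => ∃ ds : List D, l = ds.map Sum.inr ∧ M.I P w ds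
  | _, .bot => False
  | w, .imp φ ψ => Truth M w φ → Truth M w ψ
  | w, .all x φ => ∀ a : D, Truth M w (φ.subst (Sum.inl x) (Sum.inr a))
  | w, .box t _ φ => w ∈ M.E t φ ∧
      ∀ w', M.R w w' → ∀ σ : Nat → Nat ⊕ D, (∀ n, ∃ a : D, σ n = Sum.inr a) →
        Truth M w' (φ.instAll σ)
  termination_by _ φ => φ.size
  decreasing_by
    all_goals simp [Fml.size, Fml.size_subst, Fml.size_instAll]
    all_goals omega

/-- A basic-language formula as a `D`-formula. -/
def toD {D : Type} [DecidableEq D] : FmlB → Fml D := Fml.vmap fun e => e.elim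

/-- Validity in a model: the universal closure is true at every world. -/
def Valid {D : Type} [DecidableEq D] (M : FModel D) (φ : FmlB) : Prop :=
  ∀ w : M.W, Truth M w (toD φ.close)

/-- The model meets the constant specification `CS`. -/
def Meets {D : Type} [DecidableEq D] (M : FModel D) (CS : Set FmlB) : Prop :=
  ∀ (c : Nat) (φ : FmlB), Fml.box (JTerm.jconst c) ∅ φ ∈ CS →
    ∀ w : M.W, w ∈ M.E (JTerm.jconst c) (toD φ)

/-! Induction on the derivation of `ψ`. An axiom is justified by a constant (axiomatic
appropriateness), and a justification assertion `s:_X φ`, be it a hypothesis or a member of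
`CS`, is justified by `s!` (B4); modus ponens is internalized by `·` (B2) and generalization
on `x` by `gen_x` (B5). The side condition of B5 holds because every variable of the
subscript `X` is free in some hypothesis, while generalization is only applied to variables
free in none. Subscripts are enlarged to `X` by A3. -/

section Internalization

variable {V : Type} [DecidableEq V] {L : Logic} {CS Γ : Set (Fml V)}

theorem Deriv.box_mono {t : JTerm} {Y Z : Finset (Nat ⊕ V)} {φ : Fml V} (hYZ : Y ⊆ Z)
    (h : Deriv L CS Γ (Fml.box t Y φ)) : Deriv L CS Γ (Fml.box t Z φ) := by
  rw [← Finset.union_sdiff_of_subset hYZ]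
  induction Z \ Y using Finset.induction_on with
  | empty => simpa using h
  | insert a S _ ih =>
      rw [Finset.union_insert]
      exact (Deriv.ax (.a3 L t _ a φ)).mp ih

theorem Deriv.box_bang {t : JTerm} {X Y : Finset (Nat ⊕ V)} {φ : Fml V} (hXY : X ⊆ Y)
    (h : Deriv L CS Γ (Fml.box t X φ)) :
    Deriv L CS Γ (Fml.box t.bang Y (Fml.box t X φ)) :=
  Deriv.box_mono hXY ((Deriv.ax (.b4 L t X φ)).mp h)

theorem Deriv.internalize (hCS : IsCS L CS) (hApp : AxAppropriate L CS)
    {Y : Finset (Nat ⊕ V)} (hΓ : ∀ χ ∈ Γ, ∃ t, Deriv L CS Γ (Fml.box t Y χ))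
    (hY : ∀ v ∈ Y, ∃ χ ∈ Γ, v ∈ χ.fv) {ψ : Fml V} (h : Deriv L CS Γ ψ) :
    ∃ t, Deriv L CS Γ (Fml.box t Y ψ) := by
  induction h with
  | ax hφ =>
      obtain ⟨c, hc⟩ := hApp _ hφ
      exact ⟨.jconst c, Deriv.box_mono (Finset.empty_subset Y) (Deriv.cs hc)⟩
  | cs hχ =>
      obtain ⟨c, φ, rfl, -⟩ := hCS _ hχ
      exact ⟨(JTerm.jconst c).bang, Deriv.box_bang (Finset.empty_subset Y) (Deriv.cs hχ)⟩
  | hyp hχ => exact hΓ _ hχ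
  | mp _ _ ih₁ ih₂ =>
      obtain ⟨t₁, h₁⟩ := ih₁
      obtain ⟨t₂, h₂⟩ := ih₂
      exact ⟨t₁.app t₂, ((Deriv.ax (.b2 L t₁ t₂ Y _ _)).mp h₁).mp h₂⟩
  | @genR φ x _ hx ih =>
      obtain ⟨t, ht⟩ := ih
      have hxY : Sum.inl x ∉ Y := fun hmem =>
        let ⟨χ, hχ, hxχ⟩ := hY _ hmem
        hx χ hχ hxχ
      exact ⟨t.gen x, (Deriv.ax (.b5 L t Y x φ hxY)).mp ht⟩

end Internalization

/-- **Internalization** for FOLPb: if `p₀:_{X₀}φ₀, …, p_k:_{X_k}φ_k ⊢_CS ψ` with `CS`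
axiomatically appropriate, then for `X = X₀ ∪ … ∪ X_k` there is a justification term `t`
with `p₀:_{X₀}φ₀, …, p_k:_{X_k}φ_k ⊢_CS t:_X ψ`. -/
theorem internalization (CS : Set FmlB) (hCS : IsCS Logic.folpb CS)
    (hApp : AxAppropriate Logic.folpb CS)
    (k : Nat) (p : Fin (k + 1) → Nat) (Xs : Fin (k + 1) → Finset (Nat ⊕ Empty))
    (φs : Fin (k + 1) → FmlB) (ψ : FmlB)
    (h : Deriv Logic.folpb CS
      {χ | ∃ i : Fin (k + 1), χ = Fml.box (JTerm.jvar (p i)) (Xs i) (φs i)} ψ) :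
    ∃ t : JTerm,
      Deriv Logic.folpb CS
        {χ | ∃ i : Fin (k + 1), χ = Fml.box (JTerm.jvar (p i)) (Xs i) (φs i)}
        (Fml.box t (Finset.univ.biUnion Xs) ψ) := by
  refine Deriv.internalize hCS hApp ?_ ?_ h
  · rintro _ ⟨i, rfl⟩
    exact ⟨_, Deriv.box_bang (Finset.subset_biUnion_of_mem Xs (Finset.mem_univ i))
      (Deriv.hyp ⟨i, rfl⟩)⟩
  · intro v hv
    obtain ⟨i, -, hi⟩ := Finset.mem_biUnion.mp hv
    exact ⟨_, ⟨i, rfl⟩, hi⟩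
end

section
/- Validity of the justification Barcan axiom: Every instance of the scheme ∀y t:_{X∪{y}}φ(y) → b(t):_X ∀y φ(y) is valid in every Fitting model for FOLPb meeting a constant specification CS. -/
/-! Truth of `∀y ψ` is truth of every domain instance `ψ(a)`, and the domain instances of a
Barcan formula are again Barcan formulas, so it suffices to check one Barcan formula at one
world. There the b condition supplies the evidence, and the truth condition of the box reduces
to the premise because substituting a domain element for `y` commutes with the closing
substitutions `instAll σ` of the box clause. -/

namespace Fml

theorem vmap_foldr_all {V V' : Type} [DecidableEq V'] (f : V → V') (l : List Nat) (χ : Fml V) :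
    (l.foldr Fml.all χ).vmap f = l.foldr Fml.all (χ.vmap f) := by
  induction l with
  | nil => rfl
  | cons z l ih => simp [vmap, ih]

variable {V : Type} [DecidableEq V]

theorem instAll_inl (φ : Fml V) : φ.instAll Sum.inl = φ := by
  induction φ with
  | atom P l =>
    simp only [instAll, atom.injEq, true_and]
    conv_rhs => rw [← List.map_id l]
    refine List.map_congr_left fun v _ => ?_
    cases v <;> rfl
  | bot => rfl
  | imp φ ψ ihφ ihψ => rw [instAll, ihφ, ihψ]
  | all x φ ih => rw [instAll, Function.update_eq_self, ih]
  | box t X φ ih =>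
    have hX : (X.image fun v => match v with | Sum.inl n => Sum.inl n | w => w) = X := by
      conv_rhs => rw [← Finset.image_id (s := X)]
      exact Finset.image_congr fun v _ => by cases v <;> rfl
    simp only [instAll, hX, ite_self, ih]

theorem subst_eq_instAll (y : Nat) (e : Nat ⊕ V) (φ : Fml V) :
    φ.subst (Sum.inl y) e = φ.instAll (Function.update Sum.inl y e) := by
  induction φ with
  | atom P l =>
    simp only [subst, instAll, atom.injEq, true_and]
    refine List.map_congr_left fun v _ => ?_
    rcases v with n | d
    · by_cases hn : n = y <;> simp [hn]
    · simp
  | bot => rfl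
  | imp φ ψ ihφ ihψ => rw [subst, instAll, ihφ, ihψ]
  | all x φ ih =>
    by_cases hxy : x = y
    · subst hxy
      simp only [subst, instAll, if_true, Function.update_idem, Function.update_eq_self,
        instAll_inl]
    · rw [subst, instAll, if_neg (by simpa using Ne.symm hxy), ih,
        Function.update_comm (Ne.symm hxy), Function.update_eq_self]
  | box t X φ ih =>
    by_cases hyX : Sum.inl y ∈ X
    · simp only [subst, instAll, if_pos hyX, ih]
      congr 1
      · refine Finset.image_congr fun v _ => ?_
        rcases v with n | d
        · by_cases hn : n = y <;> simp [hn]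
        · simp
      · congr 1
        funext n
        by_cases hn : n = y
        · simp [hn, hyX]
        · by_cases hnX : (Sum.inl n : Nat ⊕ V) ∈ X <;> simp [hn, hnX]
    · have hid : ∀ v ∈ X, (match v with
          | Sum.inl n => Function.update Sum.inl y e n | w => w) = v := by
        rintro (n | d) hv
        · simp [show n ≠ y by rintro rfl; exact hyX hv]
        · rfl
      have hσ : (fun n => if (Sum.inl n : Nat ⊕ V) ∈ X then Function.update Sum.inl y e n
          else Sum.inl n) = Sum.inl := by
        funext n
        by_cases hnX : (Sum.inl n : Nat ⊕ V) ∈ X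
        · simp [hnX, show n ≠ y by rintro rfl; exact hyX hnX]
        · simp [hnX]
      rw [subst, if_neg hyX, instAll, Finset.image_congr hid, Finset.image_id', hσ, instAll_inl]

/-- `τ` may map a variable only to itself or to a closed term; this is what rules out capture
by the binders and by the subscripts of boxes. -/
theorem instAll_instAll (φ : Fml V) (τ σ : Nat → Nat ⊕ V)
    (hτ : ∀ n m, τ n = Sum.inl m → m = n) :
    (φ.instAll τ).instAll σ = φ.instAll fun n => Sum.elim σ Sum.inr (τ n) := by
  induction φ generalizing τ σ with
  | atom P l =>
    simp only [instAll, List.map_map, atom.injEq, true_and]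
    refine List.map_congr_left fun v _ => ?_
    rcases v with n | d
    · simp only [Function.comp_apply]
      rcases τ n with m | d <;> rfl
    · rfl
  | bot => rfl
  | imp φ ψ ihφ ihψ => rw [instAll, instAll, instAll, ihφ τ σ hτ, ihψ τ σ hτ]
  | all x φ ih =>
    have hτ' : ∀ n m, Function.update τ x (Sum.inl x) n = Sum.inl m → m = n := by
      intro n m h
      by_cases hn : n = x
      · subst hn; simpa using h.symm
      · exact hτ n m (by simpa [hn] using h)
    simp only [instAll, ih _ _ hτ', all.injEq, true_and]
    congr 1
    funext n
    by_cases hn : n = x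
    · subst hn; simp
    · rcases hτn : τ n with m | d
      · have hm : m ≠ x := by rintro rfl; exact hn (hτ n _ hτn).symm
        simp [hn, hm, hτn]
      · simp [hn, hτn]
  | box t X φ ih =>
    have hτ' : ∀ n m, (if (Sum.inl n : Nat ⊕ V) ∈ X then τ n else Sum.inl n) = Sum.inl m →
        m = n := by
      intro n m h
      split_ifs at h
      · exact hτ n m h
      · simpa using h.symm
    simp only [instAll, ih _ _ hτ', Finset.image_image, box.injEq, true_and]
    constructor
    · refine Finset.image_congr fun v _ => ?_
      rcases v with n | d
      · simp only [Function.comp_apply]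
        rcases τ n with m | d <;> rfl
      · rfl
    · congr 1
      funext n
      by_cases hnX : (Sum.inl n : Nat ⊕ V) ∈ X
      · rcases hτn : τ n with m | d
        · obtain rfl := hτ n m hτn
          have hmem : (Sum.inl m : Nat ⊕ V) ∈ X.image fun v => match v with
              | Sum.inl n => τ n | w => w :=
            Finset.mem_image.2 ⟨Sum.inl m, hnX, hτn⟩
          simp [hnX, hmem]
        · simp [hnX]
      · have hnmem : (Sum.inl n : Nat ⊕ V) ∉ X.image fun v => match v with
            | Sum.inl n => τ n | w => w := by
          simp only [Finset.mem_image, not_exists, not_and]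
          rintro (m | d) hm h
          · obtain rfl := hτ m n h
            exact hnX hm
          · exact Sum.inr_ne_inl h
        simp [hnX, hnmem]

theorem instAll_update_subst (ψ : Fml V) (σ : Nat → Nat ⊕ V)
    (hσ : ∀ n, ∃ a : V, σ n = Sum.inr a) (y : Nat) (a : V) :
    (ψ.instAll (Function.update σ y (Sum.inl y))).subst (Sum.inl y) (Sum.inr a) =
      (ψ.subst (Sum.inl y) (Sum.inr a)).instAll σ := by
  have hσy : ∀ n m, Function.update σ y (Sum.inl y) n = Sum.inl m → m = n := by
    intro n m h
    by_cases hn : n = y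
    · subst hn; simpa using h.symm
    · obtain ⟨b, hb⟩ := hσ n
      simp [hn, hb] at h
  have hsubst : ∀ n m, Function.update Sum.inl y (Sum.inr a) n = Sum.inl m → m = n := by
    intro n m h
    by_cases hn : n = y
    · simp [hn] at h
    · simpa [hn] using h.symm
  rw [subst_eq_instAll, subst_eq_instAll, instAll_instAll _ _ _ hσy,
    instAll_instAll _ _ _ hsubst]
  congr 1
  funext n
  by_cases hn : n = y
  · simp [hn]
  · obtain ⟨b, hb⟩ := hσ n
    simp [hn, hb]

theorem subst_foldr_all (x : Nat) (e : Nat ⊕ V) (l : List Nat) (χ : Fml V) :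
    (l.foldr Fml.all χ).subst (Sum.inl x) e =
      l.foldr Fml.all (if x ∈ l then χ else χ.subst (Sum.inl x) e) := by
  induction l with
  | nil => simp
  | cons z l ih =>
    by_cases hz : x = z
    · subst hz
      simp [subst]
    · simp [subst, hz, ih]

def barcan (t : JTerm) (X : Finset (Nat ⊕ V)) (y : Nat) (φ : Fml V) : Fml V :=
  (Fml.all y (Fml.box t (insert (Sum.inl y) X) φ)).imp (Fml.box t.bb X (Fml.all y φ))

def IsBarcanInstance (θ : Fml V) : Prop :=
  ∃ t X y φ, Sum.inl y ∉ X ∧ θ = barcan t X y φ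

theorem IsBarcanInstance.subst {θ : Fml V} (hθ : θ.IsBarcanInstance) (x : Nat) (a : V) :
    (θ.subst (Sum.inl x) (Sum.inr a)).IsBarcanInstance := by
  obtain ⟨t, X, y, φ, hy, rfl⟩ := hθ
  by_cases hxy : x = y
  · subst hxy
    exact ⟨t, X, x, φ, hy, by simp [barcan, Fml.subst, hy]⟩
  by_cases hxX : Sum.inl x ∈ X
  · refine ⟨t, X.image fun v => if v = Sum.inl x then Sum.inr a else v, y,
      φ.subst (Sum.inl x) (Sum.inr a), ?_, ?_⟩
    · simp only [Finset.mem_image, not_exists, not_and]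
      intro v hv h
      split_ifs at h
      exact hy (h ▸ hv)
    · simp [barcan, Fml.subst, hxy, hxX, Ne.symm hxy]
  · exact ⟨t, X, y, φ, hy, by simp [barcan, Fml.subst, hxy, hxX]⟩

theorem IsBarcanInstance.vmap {V' : Type} [DecidableEq V'] {θ : Fml V}
    (hθ : θ.IsBarcanInstance) (f : V → V') : (θ.vmap f).IsBarcanInstance := by
  obtain ⟨t, X, y, φ, hy, rfl⟩ := hθ
  refine ⟨t, X.image (Sum.map id f), y, φ.vmap f, ?_, by simp [barcan, Fml.vmap]⟩
  simpa [Finset.mem_image] using hy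

end Fml

section Semantics

variable {D : Type} [DecidableEq D] (M : FModel D)

theorem truth_barcan (w : M.W) (t : JTerm) (X : Finset (Nat ⊕ D)) (y : Nat) (φ : Fml D) :
    Truth M w (Fml.barcan t X y φ) := by
  simp only [Fml.barcan, Truth, Fml.subst, if_pos (Finset.mem_insert_self _ X)]
  intro hinst
  refine ⟨M.condB t φ y fun a => (hinst a).1, fun w' hww' σ hσ => ?_⟩
  simp only [Fml.instAll, Truth]
  intro a
  rw [Fml.instAll_update_subst φ σ hσ]
  exact (hinst a).2 w' hww' σ hσ

theorem truth_foldr_all {P : Fml D → Prop}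
    (hP : ∀ θ x a, P θ → P (θ.subst (Sum.inl x) (Sum.inr a)))
    {w : M.W} (hw : ∀ θ, P θ → Truth M w θ) (l : List Nat) {χ : Fml D} (hχ : P χ) :
    Truth M w (l.foldr Fml.all χ) := by
  induction l generalizing χ with
  | nil => exact hw χ hχ
  | cons z l ih =>
    simp only [List.foldr, Truth]
    intro a
    rw [Fml.subst_foldr_all]
    split_ifs
    · exact ih hχ
    · exact ih (hP χ z a hχ)

end Semantics

theorem barcan_axiom_valid_general
    (D : Type) [DecidableEq D] (M : FModel D)
    (t : JTerm) (X : Finset (Nat ⊕ Empty)) (y : Nat) (hy : Sum.inl y ∉ X)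
    (φ : FmlB) :
    Valid M ((Fml.all y (Fml.box t (insert (Sum.inl y) X) φ)).imp
      (Fml.box t.bb X (Fml.all y φ))) := by
  intro w
  rw [toD, Fml.close, Fml.vmap_foldr_all]
  refine truth_foldr_all M (fun θ x a hθ => hθ.subst x a) ?_ _
    (Fml.IsBarcanInstance.vmap ⟨t, X, y, φ, hy, rfl⟩ _)
  rintro _ ⟨t', X', y', ψ, -, rfl⟩
  exact truth_barcan M w t' X' y' ψ

/-- **Validity of the justification Barcan axiom**: every instance of
`∀y t:_{X∪{y}}φ(y) → b(t):_X ∀y φ(y)` is valid in every Fitting model for FOLPb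
meeting a constant specification `CS`. -/
theorem barcan_axiom_valid (CS : Set FmlB) (hCS : IsCS Logic.folpb CS)
    (D : Type) [DecidableEq D] [Nonempty D] (M : FModel D) (hM : Meets M CS)
    (t : JTerm) (X : Finset (Nat ⊕ Empty)) (y : Nat) (hy : Sum.inl y ∉ X)
    (φ : FmlB) :
    Valid M ((Fml.all y (Fml.box t (insert (Sum.inl y) X) φ)).imp
      (Fml.box t.bb X (Fml.all y φ))) :=
  barcan_axiom_valid_general D M t X y hy φ
end

section
/- Conservativity of the witness-variable extension: Let CS be a variant-closed constant specification for the basic language of FOLPb and CS(V) its extension to the language with witness variables. For every formula φ of the basic language (without witness variables), if ⊢_{CS(V)} φ then ⊢_CS φ. -/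
/-! The witness variables of a derivation in the extended language can be renamed to fresh basic
variables. Such a renaming `g` keeps an axiom an axiom as soon as it is injective on the
finitely many variables of that axiom, and it sends `c : ψ ∈ CS(V)` into `CS`: on the basic
formula underlying `ψ` it acts as an injective renaming of the free variables, which extends to a
bijective one, so variant closure applies. A derivation involves finitely many axioms, so a single
`g` works for all of its steps, and `g` leaves the basic formula being proved unchanged. -/

theorem Set.InjOn.exists_equiv_eqOn {α : Type*} [Infinite α] {f : α → α} {s : Set α}
    (hs : s.Finite) (hf : Set.InjOn f s) : ∃ π : α ≃ α, Set.EqOn π f s := by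
  obtain ⟨π, hπ⟩ := Cardinal.extend_function_of_lt ⟨fun x : s => f x, hf.injective⟩
    ((Cardinal.lt_aleph0_iff_set_finite.2 hs).trans_le (Cardinal.aleph0_le_mk α))
    ⟨Equiv.refl α⟩
  exact ⟨π, fun x hx => hπ ⟨x, hx⟩⟩

namespace Fml

variable {V V' : Type}

/-- Applies `g` to every occurrence of an individual variable but leaves binders alone, so it
behaves as a renaming only when `g` fixes the basic variables. -/
def mapVar [DecidableEq V'] (g : Nat ⊕ V → Nat ⊕ V') : Fml V → Fml V'
  | atom P l => atom P (l.map g)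
  | bot => bot
  | imp φ ψ => imp (φ.mapVar g) (ψ.mapVar g)
  | all x φ => all x (φ.mapVar g)
  | box t X φ => box t (X.image g) (φ.mapVar g)

theorem vmap_eq_mapVar [DecidableEq V'] (f : V → V') (φ : Fml V) :
    φ.vmap f = φ.mapVar (Sum.map id f) := by
  induction φ <;> simp_all [vmap, mapVar]

theorem mapVar_id [DecidableEq V] (φ : Fml V) : φ.mapVar id = φ := by
  induction φ <;> simp_all [mapVar]

theorem mapVar_mapVar {V'' : Type} [DecidableEq V'] [DecidableEq V''] (e : Nat ⊕ V → Nat ⊕ V')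
    (g : Nat ⊕ V' → Nat ⊕ V'') (φ : Fml V) : (φ.mapVar e).mapVar g = φ.mapVar (g ∘ e) := by
  induction φ <;> simp_all [mapVar, Finset.image_image]

theorem fv_subset_allVars [DecidableEq V] (φ : Fml V) : φ.fv ⊆ φ.allVars := by
  induction φ with
  | atom | bot => simp [fv, allVars]
  | imp φ ψ ihφ ihψ => exact Finset.union_subset_union ihφ ihψ
  | all x φ ih => exact Finset.sdiff_subset.trans (ih.trans (Finset.subset_insert _ _))
  | box t X φ => exact Finset.subset_union_left.trans Finset.subset_union_left

theorem renameFree_congr [DecidableEq V] (φ : Fml V) {ρ₁ ρ₂ : Nat ⊕ V → Nat ⊕ V}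
    (h : Set.EqOn ρ₁ ρ₂ φ.fv) : φ.renameFree ρ₁ = φ.renameFree ρ₂ := by
  induction φ generalizing ρ₁ ρ₂ with
  | atom P l =>
    simp only [renameFree, atom.injEq, true_and]
    exact List.map_congr_left fun v hv => h (by simpa [fv] using hv)
  | bot => rfl
  | imp φ ψ ihφ ihψ =>
    simp only [renameFree]
    rw [ihφ fun v hv => h (by simp [fv, hv]), ihψ fun v hv => h (by simp [fv, hv])]
  | all y φ ih =>
    simp only [renameFree]
    rw [ih]
    intro v hv
    by_cases hvy : v = .inl y
    · simp [hvy]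
    · simpa [Function.update_of_ne hvy] using h (by simp [fv, hv, hvy])
  | box t X φ ih =>
    simp only [renameFree]
    rw [Finset.image_congr fun v hv => h (by simpa [fv] using hv), ih]
    intro v _
    by_cases hvX : v ∈ X
    · simp [hvX, h (show v ∈ (box t X φ).fv from hvX)]
    · simp [hvX]

section InjOn

variable {g : Nat ⊕ V → Nat ⊕ V'} {T : Finset (Nat ⊕ V)}

theorem map_ne_inl_of_injOn (hg : ∀ n, g (.inl n) = .inl n) (hinj : Set.InjOn g T)
    {v : Nat ⊕ V} (hv : v ∈ T) {y : Nat} (hy : .inl y ∈ T) (hne : v ≠ .inl y) :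
    g v ≠ .inl y :=
  fun h => hne (hinj hv hy (h.trans (hg y).symm))

theorem map_mem_image_iff_of_injOn [DecidableEq V'] (hinj : Set.InjOn g T) {X : Finset (Nat ⊕ V)}
    (hX : X ⊆ T) {v : Nat ⊕ V} (hv : v ∈ T) : g v ∈ X.image g ↔ v ∈ X := by
  simpa using hinj.mem_image_iff (s₁ := X) (by simpa using hX) hv

section

variable [DecidableEq V] [DecidableEq V']

theorem fv_mapVar (hg : ∀ n, g (.inl n) = .inl n) (hinj : Set.InjOn g T) {φ : Fml V}
    (hφ : φ.allVars ⊆ T) : (φ.mapVar g).fv = φ.fv.image g := by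
  induction φ with
  | atom P l => ext; simp [mapVar, fv]
  | bot => rfl
  | imp φ ψ ihφ ihψ =>
    simp only [allVars, Finset.union_subset_iff] at hφ
    simp [mapVar, fv, ihφ hφ.1, ihψ hφ.2, Finset.image_union]
  | all x φ ih =>
    simp only [allVars, Finset.insert_subset_iff] at hφ
    ext u
    simp only [mapVar, fv, ih hφ.2, Finset.mem_sdiff, Finset.mem_image, Finset.mem_singleton]
    constructor
    · rintro ⟨⟨v, hv, rfl⟩, hne⟩
      exact ⟨v, ⟨hv, fun h => hne (h ▸ hg x)⟩, rfl⟩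
    · rintro ⟨v, ⟨hv, hne⟩, rfl⟩
      exact ⟨⟨v, hv, rfl⟩,
        map_ne_inl_of_injOn hg hinj (hφ.2 (fv_subset_allVars φ hv)) hφ.1 hne⟩
  | box t X φ => rfl

theorem map_ite_eq_of_injOn (hinj : Set.InjOn g T) {x v : Nat ⊕ V} (hx : x ∈ T) (hv : v ∈ T)
    (e : Nat ⊕ V) : g (if v = x then e else v) = if g v = g x then g e else g v := by
  by_cases hvx : v = x
  · simp [hvx]
  · rw [if_neg hvx, if_neg fun h => hvx (hinj hv hx h)]

theorem mapVar_subst (hg : ∀ n, g (.inl n) = .inl n) (hinj : Set.InjOn g T) {x : Nat ⊕ V}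
    (hx : x ∈ T) (e : Nat ⊕ V) {φ : Fml V} (hφ : φ.allVars ⊆ T) :
    (φ.subst x e).mapVar g = (φ.mapVar g).subst (g x) (g e) := by
  induction φ with
  | atom P l =>
    simp only [subst, mapVar, List.map_map, atom.injEq, true_and]
    exact List.map_congr_left fun v hv =>
      map_ite_eq_of_injOn hinj hx (hφ (by simpa [allVars] using hv)) e
  | bot => rfl
  | imp φ ψ ihφ ihψ =>
    simp only [allVars, Finset.union_subset_iff] at hφ
    simp [subst, mapVar, ihφ hφ.1, ihψ hφ.2]
  | all y φ ih =>
    simp only [allVars, Finset.insert_subset_iff] at hφ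
    by_cases hxy : x = .inl y
    · simp [subst, mapVar, hxy, hg]
    · simp [subst, mapVar, hxy, map_ne_inl_of_injOn hg hinj hx hφ.1 hxy, ih hφ.2]
  | box t X φ ih =>
    simp only [allVars, Finset.union_subset_iff] at hφ
    have hX := map_mem_image_iff_of_injOn hinj hφ.1.1 hx
    by_cases hxX : x ∈ X
    · simp only [subst, mapVar, hxX, hX.2 hxX, if_true, ih hφ.2, Finset.image_image, box.injEq,
        true_and, and_true]
      exact Finset.image_congr fun v hv => map_ite_eq_of_injOn hinj hx (hφ.1.1 hv) e
    · simp [subst, mapVar, hxX, hX]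

theorem map_notMem_fv_mapVar (hg : ∀ n, g (.inl n) = .inl n) (hinj : Set.InjOn g T)
    {v : Nat ⊕ V} (hv : v ∈ T) {φ : Fml V} (hφ : φ.allVars ⊆ T) (hvφ : v ∉ φ.fv) :
    g v ∉ (φ.mapVar g).fv := by
  rw [fv_mapVar hg hinj hφ]
  intro hmem
  obtain ⟨u, hu, huv⟩ := Finset.mem_image.1 hmem
  exact hvφ (hinj (hφ (fv_subset_allVars φ hu)) hv huv ▸ hu)

theorem freeFor_mapVar (hg : ∀ n, g (.inl n) = .inl n) (hinj : Set.InjOn g T)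
    {x e : Nat ⊕ V} (hx : x ∈ T) (he : e ∈ T) {φ : Fml V} (hφ : φ.allVars ⊆ T)
    (hfree : φ.freeFor e x) : (φ.mapVar g).freeFor (g e) (g x) := by
  induction φ with
  | atom | bot => trivial
  | imp φ ψ ihφ ihψ =>
    simp only [allVars, Finset.union_subset_iff] at hφ
    exact ⟨ihφ hφ.1 hfree.1, ihψ hφ.2 hfree.2⟩
  | all y φ ih =>
    rcases hfree with hnotfree | ⟨hne, hfree⟩
    · exact .inl (map_notMem_fv_mapVar hg hinj hx hφ hnotfree)
    · exact .inr ⟨map_ne_inl_of_injOn hg hinj he (hφ (by simp [allVars])) hne,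
      ih ((Finset.subset_insert _ _).trans hφ) hfree⟩
  | box t X φ ih =>
    simp only [allVars, Finset.union_subset_iff] at hφ
    refine ⟨ih hφ.2 hfree.1, fun hmem => ?_⟩
    rw [fv_mapVar hg hinj hφ.2] at hmem
    obtain ⟨v, hv, hve⟩ := Finset.mem_image.1 hmem
    obtain rfl := hinj (hφ.2 (fv_subset_allVars φ hv)) he hve
    exact Finset.mem_image_of_mem g (hfree.2 hv)

end

end InjOn

theorem mapVar_renameFree_mapVar [DecidableEq V] [DecidableEq V'] {e : Nat ⊕ V → Nat ⊕ V'}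
    {g : Nat ⊕ V' → Nat ⊕ V} (he : ∀ n, e (.inl n) = .inl n) (hge : Function.LeftInverse g e)
    (φ : Fml V) (ρ : Nat ⊕ V' → Nat ⊕ V') :
    ((φ.mapVar e).renameFree ρ).mapVar g = φ.renameFree (g ∘ ρ ∘ e) := by
  induction φ generalizing ρ with
  | atom P l => simp [mapVar, renameFree]
  | bot => rfl
  | imp φ ψ ihφ ihψ => simp [mapVar, renameFree, ihφ, ihψ]
  | all y φ ih =>
    simp only [mapVar, renameFree, ih, all.injEq, true_and]
    congr 1
    funext v
    by_cases hvy : v = .inl y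
    · subst hvy
      simpa [he] using hge (.inl y)
    · have : e v ≠ .inl y := fun h => hvy (hge.injective (h.trans (he y).symm))
      simp [Function.update_of_ne hvy, Function.update_of_ne this]
  | box t X φ ih =>
    simp only [mapVar, renameFree, ih, Finset.image_image, box.injEq, true_and]
    congr 1
    funext v
    by_cases hvX : v ∈ X
    · simp [hvX, Finset.mem_image_of_mem e hvX]
    · simp [hvX, hge.injective.mem_finset_image, hge v]

theorem leftInverse_sumMap_elim {g : Nat ⊕ V → Nat ⊕ Empty} (hg : ∀ n, g (.inl n) = .inl n) :
    Function.LeftInverse g (Sum.map id fun e : Empty => e.elim)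
  | .inl n => hg n

theorem mapVar_liftB {g : Nat ⊕ Nat → Nat ⊕ Empty} (hg : ∀ n, g (.inl n) = .inl n)
    (φ : FmlB) : (liftB φ).mapVar g = φ := by
  rw [liftB, vmap_eq_mapVar, mapVar_mapVar, (leftInverse_sumMap_elim hg).comp_eq_id, mapVar_id]

/-- `∀ᶠ g in genericVarMaps V V', P g` says that `P g` holds for every `g` that fixes the basic
variables and is injective on a large enough finite set of variables. -/
def genericVarMaps (V V' : Type) : Filter (Nat ⊕ V → Nat ⊕ V') :=
  ⨅ T : Finset (Nat ⊕ V), Filter.principal {g | (∀ n, g (.inl n) = .inl n) ∧ Set.InjOn g T}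

theorem eventually_genericVarMaps {P : (Nat ⊕ V → Nat ⊕ V') → Prop} (T : Finset (Nat ⊕ V))
    (h : ∀ g, (∀ n, g (.inl n) = .inl n) → Set.InjOn g T → P g) :
    ∀ᶠ g in genericVarMaps V V', P g :=
  Filter.mem_iInf_of_mem T (Filter.mem_principal.2 fun g hg => h g hg.1 hg.2)

theorem eventually_map_inl :
    ∀ᶠ g in genericVarMaps V V', ∀ n, g (.inl n) = .inl n :=
  eventually_genericVarMaps ∅ fun _ hg _ => hg

/-- Send the witness variables of `T` to basic variables beyond those occurring in `T`. -/
instance [Countable V] : (genericVarMaps V V').NeBot := by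
  refine Filter.iInf_neBot_of_directed' (Antitone.directed_ge fun T T' hT => ?_) fun T => ?_
  · exact Filter.principal_mono.2 fun g hg => ⟨hg.1, hg.2.mono (Finset.coe_subset.2 hT)⟩
  obtain ⟨c, hc⟩ := Countable.exists_injective_nat V
  set K := T.sup (Sum.elim id fun _ => 0)
  have hK : ∀ n, .inl n ∈ T → n ≤ K := fun n hn => Finset.le_sup (f := Sum.elim id _) hn
  refine Filter.principal_neBot_iff.2 ⟨Sum.elim .inl fun a => .inl (c a + K + 1), fun _ => rfl, ?_⟩
  rintro (n | a) hn (m | b) hm h <;> simp only [Sum.elim_inl, Sum.elim_inr, Sum.inl.injEq] at h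
  · rw [h]
  · have := hK n hn; omega
  · have := hK m hm; omega
  · rw [hc (by omega : c a = c b)]

end Fml

theorem IsAxiom.eventually_mapVar {V V' : Type} [DecidableEq V] [DecidableEq V'] {L : Logic}
    {φ : Fml V} (h : IsAxiom L φ) : ∀ᶠ g in Fml.genericVarMaps V V', IsAxiom L (φ.mapVar g) := by
  cases h with
  | a1k => exact .of_forall fun _ => .a1k _ _ _
  | a1s => exact .of_forall fun _ => .a1s _ _ _ _
  | a1dne => exact .of_forall fun _ => .a1dne _ _
  | a1inst L x e φ hfree =>
    refine Fml.eventually_genericVarMaps (insert e (insert (.inl x) φ.allVars)) fun g hg hinj => ?_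
    have hx : .inl x ∈ insert e (insert (.inl x) φ.allVars) := by simp
    have he : e ∈ insert e (insert (.inl x) φ.allVars) := by simp
    have hφ : φ.allVars ⊆ insert e (insert (.inl x) φ.allVars) := fun v hv => by simp [hv]
    have := IsAxiom.a1inst L x (g e) (φ.mapVar g)
      (hg x ▸ Fml.freeFor_mapVar hg hinj hx he hφ hfree)
    rwa [Fml.mapVar, Fml.mapVar, Fml.mapVar_subst hg hinj hx e hφ, hg]
  | a1allImp => exact .of_forall fun _ => .a1allImp _ _ _ _
  | a1vac L x φ hx =>
    refine Fml.eventually_genericVarMaps (insert (.inl x) φ.allVars) fun g hg hinj => ?_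
    exact .a1vac L x _ (hg x ▸ Fml.map_notMem_fv_mapVar hg hinj (by simp) (by simp) hx)
  | a2 L t X y φ hy =>
    refine Fml.eventually_genericVarMaps (insert y φ.allVars) fun g hg hinj => ?_
    simpa [Fml.mapVar] using
      IsAxiom.a2 L t (X.image g) (g y) _ (Fml.map_notMem_fv_mapVar hg hinj (by simp) (by simp) hy)
  | a3 => exact .of_forall fun g => by simpa [Fml.mapVar] using .a3 _ _ _ (g _) _
  | b1 => exact .of_forall fun _ => .b1 _ _ _ _
  | b2 => exact .of_forall fun _ => .b2 _ _ _ _ _ _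
  | b3l => exact .of_forall fun _ => .b3l _ _ _ _ _
  | b3r => exact .of_forall fun _ => .b3r _ _ _ _ _
  | b4 => exact .of_forall fun _ => .b4 _ _ _ _
  | b5 L t X x φ hx =>
    refine Fml.eventually_genericVarMaps (insert (.inl x) X) fun g hg hinj => ?_
    refine .b5 L t _ x _ fun hmem => hx ?_
    rwa [← hg x, Fml.map_mem_image_iff_of_injOn hinj (by simp) (by simp)] at hmem
  | bb t X y φ hy =>
    refine Fml.eventually_genericVarMaps (insert (.inl y) X) fun g hg hinj => ?_
    have hy' : .inl y ∉ X.image g := by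
      rwa [← hg y, Fml.map_mem_image_iff_of_injOn hinj (by simp) (by simp)]
    simpa [Fml.mapVar, hg] using IsAxiom.bb t (X.image g) y (φ.mapVar g) hy'
  | b6 => exact .of_forall fun _ => .b6 _ _ _

theorem Deriv.eventually_mapVar {V V' : Type} [DecidableEq V] [DecidableEq V'] {L : Logic}
    {CS : Set (Fml V)} {CS' : Set (Fml V')}
    (hCS : ∀ χ ∈ CS, ∀ᶠ g in Fml.genericVarMaps V V', χ.mapVar g ∈ CS') {ψ : Fml V}
    (h : Deriv L CS ∅ ψ) : ∀ᶠ g in Fml.genericVarMaps V V', Deriv L CS' ∅ (ψ.mapVar g) := by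
  induction h with
  | ax hax => exact hax.eventually_mapVar.mono fun _ => .ax
  | cs hχ => exact (hCS _ hχ).mono fun _ => .cs
  | hyp hmem => exact absurd hmem (Set.notMem_empty _)
  | mp _ _ ihimp ih => exact (ihimp.and ih).mono fun _ h => .mp h.1 h.2
  | genR _ _ ih => exact ih.mono fun _ h => .genR h fun _ hmem => absurd hmem (Set.notMem_empty _)

theorem eventually_mapVar_mem_of_mem_CSV {CS : Set FmlB} (hvc : VariantClosed CS) {χ : FmlW}
    (hχ : χ ∈ CSV CS) : ∀ᶠ g in Fml.genericVarMaps Nat Empty, χ.mapVar g ∈ CS := by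
  obtain ⟨c, φ, ρ, hφ, hρ, -, -, rfl⟩ := hχ
  set e : Nat ⊕ Empty → Nat ⊕ Nat := Sum.map id fun e => e.elim
  refine Fml.eventually_genericVarMaps (φ.fv.image (ρ ∘ e)) fun g hg hinj => ?_
  have hge := Fml.leftInverse_sumMap_elim hg
  have hinj' : Set.InjOn (g ∘ ρ ∘ e) φ.fv := by
    rw [Finset.coe_image] at hinj
    exact hinj.comp (hρ.comp hge.injective).injOn (Set.mapsTo_image _ _)
  obtain ⟨π, hπ⟩ := hinj'.exists_equiv_eqOn φ.fv.finite_toSet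
  have hrename : ((liftB φ).renameFree ρ).mapVar g = φ.renameFree π := by
    rw [liftB, Fml.vmap_eq_mapVar, Fml.mapVar_renameFree_mapVar (fun _ => rfl) hge,
      Fml.renameFree_congr φ hπ.symm]
  simpa [Fml.mapVar, hrename] using (hvc φ _ c ⟨π, π.bijective, rfl⟩).1 hφ

theorem conservativity_general (CS : Set FmlB) (hvc : VariantClosed CS) (φ : FmlB)
    (h : Deriv Logic.folpb (CSV CS) ∅ (liftB φ)) :
    Deriv Logic.folpb CS ∅ φ := by
  obtain ⟨g, hderiv, hg⟩ :=
    ((h.eventually_mapVar fun _ => eventually_mapVar_mem_of_mem_CSV hvc).and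
      Fml.eventually_map_inl).exists
  rwa [Fml.mapVar_liftB hg] at hderiv

/-- **Conservativity** of the witness-variable extension: for a variant-closed basic
constant specification `CS` and a basic-language formula `φ`, if `⊢_{CS(V)} φ` then
`⊢_CS φ`. -/
theorem conservativity (CS : Set FmlB) (hCS : IsCS Logic.folpb CS)
    (hvc : VariantClosed CS) (φ : FmlB)
    (h : Deriv Logic.folpb (CSV CS) ∅ (liftB φ)) :
    Deriv Logic.folpb CS ∅ φ :=
  conservativity_general CS hvc φ h
end

section
/- Vacuous quantification for disjunctive templates: Let F(p⃗) be a disjunctive template and φ⃗ a sequence of Henkin formulas none of which contain free occurrences of the basic variable y. For each ψ ∈ ⟦F(φ⃗)⟧ there is some θ ∈ ⟦F(φ⃗)⟧ such that ⊢_{CS(V)} ∃y ψ → θ. -/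
/-! In the instantiation set every boxed instance is `t :_X ψ` with `X` the witness
variables of `ψ`, and `fv (t :_X ψ) = X`, so the only free basic variables of an
instance come from the letters. Hence `y` is not free in `ψ`, and `∃y ψ → ψ` follows
from the vacuous-quantification axiom `¬ψ → ∀y ¬ψ` by contraposition; take `θ = ψ`. -/

namespace Deriv

variable {V : Type} [DecidableEq V] {L : Logic} {CS Γ : Set (Fml V)}

theorem imp_trans {A B C : Fml V} (hAB : Deriv L CS Γ (A.imp B))
    (hBC : Deriv L CS Γ (B.imp C)) : Deriv L CS Γ (A.imp C) :=
  .mp (.mp (.ax (.a1s L A B C)) (.mp (.ax (.a1k L (B.imp C) A)) hBC)) hAB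

theorem neg_imp_neg {A B : Fml V} (h : Deriv L CS Γ (A.imp B)) :
    Deriv L CS Γ (B.neg.imp A.neg) := by
  have hswap : Deriv L CS Γ (B.neg.imp ((A.imp B).imp A.neg)) :=
    imp_trans (.ax (.a1k L B.neg A)) (.ax (.a1s L A B Fml.bot))
  exact .mp (.mp (.ax (.a1s L _ _ _)) hswap) (.mp (.ax (.a1k L (A.imp B) B.neg)) h)

theorem ex_imp_of_not_mem_fv {y : Nat} {ψ : Fml V} (hy : Sum.inl y ∉ ψ.fv) :
    Deriv L CS Γ ((Fml.ex y ψ).imp ψ) := by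
  have hvac : Deriv L CS Γ (ψ.neg.imp (Fml.all y ψ.neg)) :=
    .ax (.a1vac L y ψ.neg (by simpa [Fml.neg, Fml.fv] using hy))
  exact imp_trans hvac.neg_imp_neg (.ax (.a1dne L ψ))

end Deriv

theorem Inst.not_mem_fv {v : Nat → FmlW} {F : Tmpl} {ψ : FmlW} {y : Nat}
    (h : Inst v F ψ) (hv : ∀ i ∈ F.letters, Sum.inl y ∉ (v i).fv) :
    Sum.inl y ∉ ψ.fv := by
  induction h with
  | pvar i => exact hv i (by simp [Tmpl.letters])
  | neg _ ih => simpa [Fml.neg, Fml.fv] using ih hv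
  | orr _ _ ihG ihH | andd _ _ ihG ihH =>
    have hG := ihG fun i hi => hv i (Multiset.mem_add.2 (.inl hi))
    have hH := ihH fun i hi => hv i (Multiset.mem_add.2 (.inr hi))
    simp [Fml.orr, Fml.andd, Fml.neg, Fml.fv, hG, hH]
  | box t _ _ => simp [Fml.fv, Fml.wvars]

theorem vacuous_quantification_general (CS : Set FmlB) (F : Tmpl) (v : Nat → FmlW) (y : Nat)
    (hv : ∀ i ∈ F.letters, Sum.inl y ∉ (v i).fv)
    (ψ : FmlW) (h : Inst v F ψ) :
    ∃ θ : FmlW, Inst v F θ ∧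
      Deriv Logic.folpb (CSV CS) ∅ ((Fml.ex y ψ).imp θ) :=
  ⟨ψ, h, Deriv.ex_imp_of_not_mem_fv (h.not_mem_fv hv)⟩

/-- **Vacuous quantification** for disjunctive templates: if no instantiating formula
contains `y` free, then for each `ψ ∈ ⟦F(φ⃗)⟧` there is `θ ∈ ⟦F(φ⃗)⟧` with
`⊢_{CS(V)} ∃y ψ → θ`. -/
theorem vacuous_quantification (CS : Set FmlB) (hCS : IsCS Logic.folpb CS)
    (hvc : VariantClosed CS) (hApp : AxAppropriate Logic.folpb CS)
    (F : Tmpl) (hT : F.IsTemplate) (hd : F.Disjunctive)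
    (v : Nat → FmlW) (y : Nat)
    (hv : ∀ i ∈ F.letters, Sum.inl y ∉ (v i).fv)
    (ψ : FmlW) (h : Inst v F ψ) :
    ∃ θ : FmlW, Inst v F θ ∧
      Deriv Logic.folpb (CSV CS) ∅ ((Fml.ex y ψ).imp θ) :=
  vacuous_quantification_general CS F v y hv ψ h
end
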